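/- First-order error bound for Lipschitz functions: if f : ℝ → ℝ is Lipschitz with constant K, then for all x ∈ ℝ and n ≥ 1, |B_n(f,x) − f(x)| ≤ K · ∑_{k∈ℤ} |k/n − x| Φ(nx − k), and this sum is finite, bounded by (K/n) ∑_{k∈ℤ} |nx − k| Φ(nx − k) ≤ (K/n) · S where S = sup_{y∈ℝ} ∑_{k∈ℤ} |y − k| Φ(y − k) < ∞. -/

import Mathlib

noncomputable def g (q lam : ℝ) (x : ℝ) : ℝ :=
  (Real.exp (lam * x) - q * Real.exp (-lam * x)) /
    (Real.exp (lam * x) + q * Real.exp (-lam * x))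

noncomputable def M (q lam : ℝ) (x : ℝ) : ℝ :=
  (g q lam (x + 1) - g q lam (x - 1)) / 4

noncomputable def Phi (q lam : ℝ) (x : ℝ) : ℝ :=
  (M q lam x + M (1 / q) lam x) / 2

open Real Filter Topology

noncomputable def Fq (q t : ℝ) : ℝ := q / (Real.exp t + q)

lemma g_eq (q lam x : ℝ) (hq : 0 < q) :
    g q lam x = 1 - 2 * Fq q (2 * lam * x) := by
  have h1 : Real.exp (lam * x) + q * Real.exp (-lam * x) > 0 := by positivity
  have h2 : Real.exp (2 * lam * x) + q > 0 := by positivity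
  have he : Real.exp (2 * lam * x) = Real.exp (lam * x) * Real.exp (lam * x) := by
    rw [← Real.exp_add]; ring_nf
  have hne : Real.exp (-lam * x) = (Real.exp (lam * x))⁻¹ := by
    rw [← Real.exp_neg]; ring_nf
  rw [g, Fq]
  rw [he, hne] at *
  have hE := Real.exp_pos (lam * x)
  field_simp
  ring

lemma M_eq (q lam x : ℝ) (hq : 0 < q) :
    M q lam x = (Fq q (2 * lam * (x - 1)) - Fq q (2 * lam * (x + 1))) / 2 := by
  rw [M, g_eq q lam (x+1) hq, g_eq q lam (x-1) hq]; ring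

lemma Fq_pos {q : ℝ} (hq : 0 < q) (t : ℝ) : 0 < Fq q t := by
  rw [Fq]; positivity

lemma Fq_le_one {q : ℝ} (hq : 0 < q) (t : ℝ) : Fq q t ≤ 1 := by
  rw [Fq, div_le_one (by positivity)]
  linarith [Real.exp_pos t]

lemma Fq_anti {q : ℝ} (hq : 0 < q) {s t : ℝ} (hst : s ≤ t) : Fq q t ≤ Fq q s := by
  rw [Fq, Fq]
  gcongr

lemma Fq_le {q : ℝ} (hq : 0 < q) (t : ℝ) : Fq q t ≤ q * Real.exp (-t) := by
  rw [Fq, div_le_iff₀ (by positivity)]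
  have h1 := Real.exp_pos t
  have h2 : Real.exp (-t) * Real.exp t = 1 := by rw [← Real.exp_add]; simp
  nlinarith [mul_pos hq (Real.exp_pos (-t)), h2, sq_nonneg q, mul_pos (mul_pos hq (Real.exp_pos (-t))) hq]

lemma one_sub_Fq_le {q : ℝ} (hq : 0 < q) (t : ℝ) : 1 - Fq q t ≤ Real.exp t / q := by
  have h : 1 - Fq q t = Real.exp t / (Real.exp t + q) := by
    rw [Fq]; field_simp; ring
  rw [h]
  gcongr
  linarith [Real.exp_pos t]


lemma tendsto_Fq_atBot {q : ℝ} (hq : 0 < q) :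
    Tendsto (fun t : ℝ => Fq q t) atBot (𝓝 1) := by
  have h : Tendsto (fun t : ℝ => Real.exp t + q) atBot (𝓝 (0 + q)) :=
    Real.tendsto_exp_atBot.add tendsto_const_nhds
  have h2 := (tendsto_const_nhds (x := q) (f := atBot)).div h (by positivity)
  have : q / (0 + q) = 1 := by field_simp; ring
  rw [this] at h2
  exact h2

lemma tendsto_Fq_atTop {q : ℝ} (hq : 0 < q) :
    Tendsto (fun t : ℝ => Fq q t) atTop (𝓝 0) := by
  have h : Tendsto (fun t : ℝ => Real.exp t + q) atTop atTop :=
    tendsto_atTop_add_const_right _ q Real.tendsto_exp_atTop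
  exact tendsto_const_nhds.div_atTop h

lemma key1 {q lam : ℝ} (hq : 0 < q) (hlam : 0 < lam) (c : ℝ) :
    Tendsto (fun N : ℕ => Fq q (2 * lam * (c - N))) atTop (𝓝 1) := by
  apply (tendsto_Fq_atBot hq).comp
  apply Tendsto.const_mul_atBot (by positivity : (0:ℝ) < 2 * lam)
  simp only [sub_eq_add_neg]
  exact tendsto_atBot_add_const_left _ c
    (tendsto_neg_atBot_iff.2 tendsto_natCast_atTop_atTop)

lemma key0 {q lam : ℝ} (hq : 0 < q) (hlam : 0 < lam) (c : ℝ) :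
    Tendsto (fun N : ℕ => Fq q (2 * lam * (c + N))) atTop (𝓝 0) := by
  apply (tendsto_Fq_atTop hq).comp
  apply Tendsto.const_mul_atTop (by positivity : (0:ℝ) < 2 * lam)
  exact tendsto_atTop_add_const_left _ c tendsto_natCast_atTop_atTop

lemma hasSum_M (q lam : ℝ) (hq : 0 < q) (hlam : 0 < lam) (y : ℝ) :
    HasSum (fun k : ℤ => M q lam (y - k)) 1 := by
  set b : ℤ → ℝ := fun j => Fq q (2 * lam * (y - j)) with hb
  set c : ℤ → ℝ := fun k => M q lam (y - k) with hc
  have hM : ∀ k : ℤ, c k = (b (k + 1) - b (k - 1)) / 2 := by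
    intro k
    rw [hc, hb]
    simp only
    rw [M_eq _ _ _ hq]
    push_cast
    ring_nf
  have hmono : ∀ {i j : ℤ}, i ≤ j → b i ≤ b j := by
    intro i j hij
    apply Fq_anti hq
    have h : (i : ℝ) ≤ j := by exact_mod_cast hij
    nlinarith
  have hnn : ∀ k : ℤ, 0 ≤ c k := by
    intro k; rw [hM]
    have := hmono (show (k:ℤ) - 1 ≤ k + 1 by omega)
    linarith
  have hb0 : ∀ j, 0 ≤ b j := fun j => (Fq_pos hq _).le
  have hb1 : ∀ j, b j ≤ 1 := fun j => Fq_le_one hq _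
  -- positive side
  have heqpos : ∀ N : ℕ, ∑ i ∈ Finset.range N, c i
      = (b N + b ((N:ℤ) - 1) - b 0 - b (-1)) / 2 := by
    intro N
    induction N with
    | zero => norm_num
    | succ n ih =>
      rw [Finset.sum_range_succ, ih, hM]
      have e2 : ((n:ℤ) + 1 - 1) = (n : ℤ) := by ring
      push_cast
      rw [e2]
      ring
  have hpos : HasSum (fun n : ℕ => c n) ((1 + 1 - b 0 - b (-1)) / 2) := by
    rw [hasSum_iff_tendsto_nat_of_nonneg (fun i => hnn i)]
    have hl1 : Tendsto (fun N : ℕ => b N) atTop (𝓝 1) := by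
      have := key1 hq hlam y
      convert this using 2 with N
      simp only [hb, Int.cast_natCast]
    have hl2 : Tendsto (fun N : ℕ => b ((N:ℤ) - 1)) atTop (𝓝 1) := by
      have := key1 hq hlam (y + 1)
      convert this using 2 with N
      simp only [hb]
      congr 1
      push_cast
      ring
    have h2 := ((hl1.add hl2).sub (tendsto_const_nhds (x := b 0))).sub
      (tendsto_const_nhds (x := b (-1)))
    have h3 := h2.div_const 2
    convert h3 using 1
    funext N; rw [heqpos N]
  -- negative side
  have heqneg : ∀ N : ℕ, ∑ i ∈ Finset.range N, c (-(i + 1))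
      = (b 0 + b (-1) - b (-(N:ℤ)) - b (-(N:ℤ) - 1)) / 2 := by
    intro N
    induction N with
    | zero => norm_num
    | succ n ih =>
      rw [Finset.sum_range_succ, ih, hM]
      have e1 : (-((n:ℤ) + 1) + 1) = -(n:ℤ) := by ring
      push_cast
      rw [e1]
      ring_nf
  have hneg : HasSum (fun n : ℕ => c (-((n:ℤ) + 1))) ((b 0 + b (-1)) / 2) := by
    rw [hasSum_iff_tendsto_nat_of_nonneg (fun i => hnn _)]
    have hm1 : Tendsto (fun N : ℕ => b (-(N:ℤ))) atTop (𝓝 0) := by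
      have := key0 hq hlam y
      convert this using 2 with N
      simp only [hb]
      congr 1
      push_cast
      ring
    have hm2 : Tendsto (fun N : ℕ => b (-(N:ℤ) - 1)) atTop (𝓝 0) := by
      have := key0 hq hlam (y + 1)
      convert this using 2 with N
      simp only [hb]
      congr 1
      push_cast
      ring
    have h2 := (((tendsto_const_nhds (x := b 0)).add
      (tendsto_const_nhds (x := b (-1)))).sub hm1).sub hm2
    have h3 := h2.div_const 2
    convert h3 using 1
    · funext N; rw [heqneg N]
    · ring
  have htot := hpos.of_nat_of_neg_add_one hneg
  have hval : (1 + 1 - b 0 - b (-1)) / 2 + (b 0 + b (-1)) / 2 = 1 := by ring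
  rw [hval] at htot
  exact htot

lemma hasSum_Phi (q lam : ℝ) (hq : 0 < q) (hlam : 0 < lam) (y : ℝ) :
    HasSum (fun k : ℤ => Phi q lam (y - k)) 1 := by
  have h1 := hasSum_M q lam hq hlam y
  have h2 := hasSum_M (1/q) lam (by positivity) hlam y
  have h3 := (h1.add h2).div_const 2
  have : (1 + 1 : ℝ) / 2 = 1 := by norm_num
  rw [this] at h3
  exact h3

lemma M_nonneg {q lam : ℝ} (hq : 0 < q) (hlam : 0 < lam) (x : ℝ) : 0 ≤ M q lam x := by
  rw [M_eq _ _ _ hq]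
  have := Fq_anti hq (show 2*lam*(x-1) ≤ 2*lam*(x+1) by nlinarith)
  linarith

lemma Phi_nonneg {q lam : ℝ} (hq : 0 < q) (hlam : 0 < lam) (x : ℝ) : 0 ≤ Phi q lam x := by
  rw [Phi]
  have h1 := M_nonneg hq hlam x
  have h2 := M_nonneg (show (0:ℝ) < 1/q by positivity) hlam x
  linarith

lemma M_le {q lam : ℝ} (hq : 0 < q) (hlam : 0 < lam) (x : ℝ) :
    M q lam x ≤ (q + 1/q) * Real.exp (2*lam) / 2 * Real.exp (-(2*lam*|x|)) := by
  rw [M_eq _ _ _ hq]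
  have hED : 0 < Real.exp (2*lam) * Real.exp (-(2*lam*|x|)) := by positivity
  have h5 : 0 ≤ 1/q * (Real.exp (2*lam) * Real.exp (-(2*lam*|x|))) := by positivity
  have h6 : 0 ≤ q * (Real.exp (2*lam) * Real.exp (-(2*lam*|x|))) := by positivity
  rcases le_or_gt 0 x with hx | hx
  · have h1 := Fq_le hq (2*lam*(x-1))
    have h2 := (Fq_pos hq (2*lam*(x+1))).le
    have h3 : Real.exp (-(2*lam*(x-1))) = Real.exp (2*lam) * Real.exp (-(2*lam*|x|)) := by
      rw [← Real.exp_add, abs_of_nonneg hx]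
      congr 1
      ring
    rw [h3] at h1
    linarith
  · have h1 := Fq_le_one hq (2*lam*(x-1))
    have h2 := one_sub_Fq_le hq (2*lam*(x+1))
    have h3 : Real.exp (2*lam*(x+1)) = Real.exp (2*lam) * Real.exp (-(2*lam*|x|)) := by
      rw [← Real.exp_add, abs_of_neg hx]
      congr 1
      ring
    rw [h3] at h2
    have h4 : Real.exp (2*lam) * Real.exp (-(2*lam*|x|)) / q
        = 1/q * (Real.exp (2*lam) * Real.exp (-(2*lam*|x|))) := by ring
    rw [h4] at h2
    linarith

lemma Phi_le {q lam : ℝ} (hq : 0 < q) (hlam : 0 < lam) (x : ℝ) :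
    Phi q lam x ≤ (q + 1/q) * Real.exp (2*lam) / 2 * Real.exp (-(2*lam*|x|)) := by
  rw [Phi]
  have h1 := M_le hq hlam x
  have h2 := M_le (show (0:ℝ) < 1/q by positivity) hlam x
  rw [one_div_one_div] at h2
  have : (1/q + q) = (q + 1/q) := by ring
  rw [this] at h2
  linarith

lemma wPhi_le {q lam : ℝ} (hq : 0 < q) (hlam : 0 < lam) (x : ℝ) :
    |x| * Phi q lam x ≤
      (q + 1/q) * Real.exp (2*lam) / 2 / lam * Real.exp (-(lam*|x|)) := by
  have h1 : |x| ≤ Real.exp (lam*|x|) / lam := by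
    rw [le_div_iff₀ hlam]
    have := Real.add_one_le_exp (lam*|x|)
    nlinarith [abs_nonneg x, Real.exp_pos (lam*|x|)]
  have h2 := Phi_le hq hlam x
  have h3 : Real.exp (lam*|x|) / lam * ((q + 1/q) * Real.exp (2*lam) / 2 * Real.exp (-(2*lam*|x|)))
      = (q + 1/q) * Real.exp (2*lam) / 2 / lam * Real.exp (-(lam*|x|)) := by
    have he : Real.exp (lam*|x|) * Real.exp (-(2*lam*|x|)) = Real.exp (-(lam*|x|)) := by
      rw [← Real.exp_add]
      congr 1
      ring
    calc Real.exp (lam*|x|) / lam * ((q + 1/q) * Real.exp (2*lam) / 2 * Real.exp (-(2*lam*|x|)))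
        = (q + 1/q) * Real.exp (2*lam) / 2 / lam * (Real.exp (lam*|x|) * Real.exp (-(2*lam*|x|))) := by ring
      _ = _ := by rw [he]
  calc |x| * Phi q lam x
      ≤ (Real.exp (lam*|x|) / lam) * ((q + 1/q) * Real.exp (2*lam) / 2 * Real.exp (-(2*lam*|x|))) := by
        apply mul_le_mul h1 h2 (Phi_nonneg hq hlam x)
        positivity
    _ = _ := h3

lemma summable_expabs {lam : ℝ} (hlam : 0 < lam) :
    Summable (fun k : ℤ => Real.exp (-(lam * |(k:ℝ)|))) := by
  have hgeo : Summable (fun n : ℕ => Real.exp (-lam) ^ n) :=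
    summable_geometric_of_lt_one (Real.exp_pos _).le
      (Real.exp_lt_one_iff.2 (by linarith))
  apply Summable.of_nat_of_neg_add_one
  · refine hgeo.congr fun n => ?_
    rw [← Real.exp_nat_mul]
    congr 1
    push_cast
    rw [abs_of_nonneg (show (0:ℝ) ≤ (n:ℝ) by positivity)]
    ring
  · refine (hgeo.mul_right (Real.exp (-lam))).congr fun n => ?_
    rw [← Real.exp_nat_mul, ← Real.exp_add]
    congr 1
    push_cast
    rw [abs_of_nonpos (show (-((n:ℝ)+1)) ≤ 0 by
      have : (0:ℝ) ≤ (n:ℝ) := by positivity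
      linarith)]
    ring

lemma summable_shift {lam : ℝ} (hlam : 0 < lam) (m : ℤ) :
    Summable (fun k : ℤ => Real.exp (-(lam * |(k:ℝ) - (m:ℝ)|))) := by
  have h := (Equiv.subRight m).summable_iff.2 (summable_expabs hlam)
  refine h.congr fun k => ?_
  simp only [Function.comp_apply, Equiv.subRight_apply]
  congr 2
  push_cast
  ring

lemma tsum_shift {lam : ℝ} (hlam : 0 < lam) (m : ℤ) :
    (∑' k : ℤ, Real.exp (-(lam * |(k:ℝ) - (m:ℝ)|)))
      = ∑' k : ℤ, Real.exp (-(lam * |(k:ℝ)|)) := by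
  have h := (Equiv.subRight m).tsum_eq (fun j : ℤ => Real.exp (-(lam * |(j:ℝ)|)))
  rw [← h]
  congr 1
  funext k
  simp only [Equiv.subRight_apply]
  congr 2
  push_cast
  ring

lemma sum_wPhi_bound (q lam : ℝ) (hq : 0 < q) (hlam : 0 < lam) :
    ∃ S : ℝ, ∀ y : ℝ,
      Summable (fun k : ℤ => |y - (k:ℝ)| * Phi q lam (y - k)) ∧
      (∑' k : ℤ, |y - (k:ℝ)| * Phi q lam (y - k)) ≤ S := by
  set D := (q + 1/q) * Real.exp (2*lam) / 2 / lam with hD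
  set T0 := ∑' k : ℤ, Real.exp (-(lam * |(k:ℝ)|)) with hT0
  refine ⟨D * Real.exp lam * T0, fun y => ?_⟩
  set m : ℤ := ⌊y⌋ with hm
  have hym : |y - (m:ℝ)| ≤ 1 := by
    rw [hm, abs_of_nonneg (sub_nonneg.2 (Int.floor_le y))]
    have := Int.lt_floor_add_one y
    linarith
  have hD0 : 0 ≤ D := by rw [hD]; positivity
  have hpt : ∀ k : ℤ, |y - (k:ℝ)| * Phi q lam (y - k)
      ≤ (D * Real.exp lam) * Real.exp (-(lam * |(k:ℝ) - (m:ℝ)|)) := by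
    intro k
    have h1 := wPhi_le hq hlam (y - k)
    rw [← hD] at h1
    have h2 : Real.exp (-(lam * |y - (k:ℝ)|))
        ≤ Real.exp lam * Real.exp (-(lam * |(k:ℝ) - (m:ℝ)|)) := by
      rw [← Real.exp_add]
      apply Real.exp_le_exp.2
      have h3 : |(k:ℝ) - (m:ℝ)| ≤ |y - (k:ℝ)| + 1 := by
        calc |(k:ℝ) - (m:ℝ)| ≤ |(k:ℝ) - y| + |y - (m:ℝ)| := abs_sub_le _ _ _
          _ ≤ |y - (k:ℝ)| + 1 := by rw [abs_sub_comm]; linarith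
      nlinarith
    calc |y - (k:ℝ)| * Phi q lam (y - k) ≤ D * Real.exp (-(lam * |y - (k:ℝ)|)) := h1
      _ ≤ D * (Real.exp lam * Real.exp (-(lam * |(k:ℝ) - (m:ℝ)|))) :=
          mul_le_mul_of_nonneg_left h2 hD0
      _ = _ := by ring
  have hnn : ∀ k : ℤ, 0 ≤ |y - (k:ℝ)| * Phi q lam (y - k) :=
    fun k => mul_nonneg (abs_nonneg _) (Phi_nonneg hq hlam _)
  have hgs : Summable (fun k : ℤ => (D * Real.exp lam) * Real.exp (-(lam * |(k:ℝ) - (m:ℝ)|))) :=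
    (summable_shift hlam m).mul_left _
  have hsum : Summable (fun k : ℤ => |y - (k:ℝ)| * Phi q lam (y - k)) :=
    Summable.of_nonneg_of_le hnn hpt hgs
  refine ⟨hsum, ?_⟩
  calc (∑' k : ℤ, |y - (k:ℝ)| * Phi q lam (y - k))
      ≤ ∑' k : ℤ, (D * Real.exp lam) * Real.exp (-(lam * |(k:ℝ) - (m:ℝ)|)) :=
        Summable.tsum_le_tsum hpt hsum hgs
    _ = (D * Real.exp lam) * ∑' k : ℤ, Real.exp (-(lam * |(k:ℝ) - (m:ℝ)|)) := tsum_mul_left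
    _ = D * Real.exp lam * T0 := by rw [tsum_shift hlam m]


theorem B_n_lipschitz_error (q lam : ℝ) (hq : 0 < q) (hlam : 0 < lam)
    (K : NNReal) (f : ℝ → ℝ) (hf : LipschitzWith K f)
    (n : ℕ) (hn : 1 ≤ n) (x : ℝ) :
    Summable (fun k : ℤ => |(k : ℝ) / n - x| * Phi q lam (n * x - k)) ∧
    |(∑' k : ℤ, f ((k : ℝ) / n) * Phi q lam (n * x - k)) - f x| ≤
      (K : ℝ) * ∑' k : ℤ, |(k : ℝ) / n - x| * Phi q lam (n * x - k) ∧
    ∃ S : ℝ, (∀ y : ℝ, ∑' k : ℤ, |y - (k : ℝ)| * Phi q lam (y - k) ≤ S) ∧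
      (K : ℝ) * (∑' k : ℤ, |(k : ℝ) / n - x| * Phi q lam (n * x - k)) ≤
        (K : ℝ) / n * S := by
  have hn' : (1:ℝ) ≤ n := by exact_mod_cast hn
  have hn0 : (0:ℝ) < n := by linarith
  obtain ⟨S, hS⟩ := sum_wPhi_bound q lam hq hlam
  set y := (n:ℝ) * x with hy
  obtain ⟨hsumW, hleS⟩ := hS y
  have habs : ∀ k : ℤ, |(k:ℝ)/n - x| = (1/n) * |y - (k:ℝ)| := by
    intro k
    have h : (k:ℝ)/n - x = -((y - k)/n) := by
      rw [hy]; field_simp; ring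
    rw [h, abs_neg, abs_div, abs_of_pos hn0]
    ring
  have hsum1 : Summable (fun k : ℤ => |(k:ℝ)/n - x| * Phi q lam (y - k)) := by
    refine ((hsumW.mul_left (1/(n:ℝ))).congr fun k => ?_)
    rw [habs]; ring
  have htsum1 : (∑' k : ℤ, |(k:ℝ)/n - x| * Phi q lam (y - k))
      = (1/n) * ∑' k : ℤ, |y - (k:ℝ)| * Phi q lam (y - k) := by
    rw [← tsum_mul_left]
    congr 1
    funext k
    rw [habs]; ring
  refine ⟨hsum1, ?_, ?_⟩
  · have hΦ := hasSum_Phi q lam hq hlam y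
    have hΦs : Summable (fun k : ℤ => Phi q lam (y - k)) := hΦ.summable
    have hlip : ∀ k : ℤ, |f ((k:ℝ)/n) - f x| ≤ (K:ℝ) * |(k:ℝ)/n - x| := by
      intro k
      have h := hf.dist_le_mul ((k:ℝ)/n) x
      rwa [Real.dist_eq, Real.dist_eq] at h
    have hptabs : ∀ k : ℤ, |(f ((k:ℝ)/n) - f x) * Phi q lam (y - k)|
        ≤ (K:ℝ) * (|(k:ℝ)/n - x| * Phi q lam (y - k)) := by
      intro k
      rw [abs_mul, abs_of_nonneg (Phi_nonneg hq hlam _), ← mul_assoc]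
      exact mul_le_mul_of_nonneg_right (hlip k) (Phi_nonneg hq hlam _)
    have hsumabs : Summable (fun k : ℤ => |(f ((k:ℝ)/n) - f x) * Phi q lam (y - k)|) :=
      Summable.of_nonneg_of_le (fun k => abs_nonneg _) hptabs (hsum1.mul_left (K:ℝ))
    have hsum2 : Summable (fun k : ℤ => (f ((k:ℝ)/n) - f x) * Phi q lam (y - k)) :=
      hsumabs.of_abs
    have hsumf : Summable (fun k : ℤ => f ((k:ℝ)/n) * Phi q lam (y - k)) := by
      refine (hsum2.add (hΦs.mul_left (f x))).congr fun k => ?_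
      ring
    have hsplit : (∑' k : ℤ, f ((k:ℝ)/n) * Phi q lam (y - k)) - f x
        = ∑' k : ℤ, (f ((k:ℝ)/n) - f x) * Phi q lam (y - k) := by
      have h1 : (∑' k : ℤ, f x * Phi q lam (y - k)) = f x := by
        rw [tsum_mul_left, hΦ.tsum_eq, mul_one]
      conv_lhs => rw [← h1]
      rw [← Summable.tsum_sub hsumf (hΦs.mul_left (f x))]
      congr 1
      funext k
      ring
    rw [hsplit]
    calc |∑' k : ℤ, (f ((k:ℝ)/n) - f x) * Phi q lam (y - k)|
        ≤ ∑' k : ℤ, |(f ((k:ℝ)/n) - f x) * Phi q lam (y - k)| := by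
          have h := norm_tsum_le_tsum_norm (f := fun k : ℤ => (f ((k:ℝ)/n) - f x) * Phi q lam (y - k)) (by simpa only [Real.norm_eq_abs] using hsumabs)
          simpa only [Real.norm_eq_abs] using h
      _ ≤ ∑' k : ℤ, (K:ℝ) * (|(k:ℝ)/n - x| * Phi q lam (y - k)) :=
          Summable.tsum_le_tsum hptabs hsumabs (hsum1.mul_left (K:ℝ))
      _ = (K:ℝ) * ∑' k : ℤ, |(k:ℝ)/n - x| * Phi q lam (y - k) := tsum_mul_left
  · refine ⟨S, fun y' => (hS y').2, ?_⟩
    rw [htsum1]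
    have hK0 : (0:ℝ) ≤ (K:ℝ) := K.2
    calc (K:ℝ) * ((1/n) * ∑' k : ℤ, |y - (k:ℝ)| * Phi q lam (y - k))
        = ((K:ℝ)/n) * ∑' k : ℤ, |y - (k:ℝ)| * Phi q lam (y - k) := by ring
      _ ≤ (K:ℝ)/n * S := mul_le_mul_of_nonneg_left hleS (by positivity)
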